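/- arXiv:1705.06842 — 2 statements merged into one kernel-verified Lean document; each statement's English description precedes it below -/
import Mathlib

section
/- Let G be a group generated by n elements (n ≥ 2) such that for every g in G the twisted conjugacy class [e]_g = {[x,g] : x ∈ G} is a subgroup of G. Then every element of the derived subgroup [G,G] is a product of at most n−1 commutators [a,b] = a⁻¹b⁻¹ab with a, b ∈ G. -/
open scoped commutatorElement

/-- The twisted conjugacy class of the identity under the inner automorphism
induced by `g`: `[e]_g = {⁅x, g⁆ : x ∈ G}`. -/
def twistedClass {G : Type*} [Group G] (g : G) : Set G :=
  {y : G | ∃ x : G, y = ⁅x, g⁆}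

/-!
If `[e]_g` is a subgroup `H_g`, it is normal, because `b ⁅y, g⁆ b⁻¹ = ⁅b y, g⁆ ⁅b, g⁆⁻¹`.
Let `x₀, …, x_{n-1}` generate `G` and `N = H_{x₁} ⊔ ⋯ ⊔ H_{x_{n-1}}`. Modulo `N` every `x_i`
with `i ≥ 1` is central, so `G ⧸ N` is generated by `x₀` together with central elements and is
abelian; hence `[G, G] ≤ N`. A join of `n - 1` normal subgroups is their product, and every
element of `H_{x_i}` is a single commutator `⁅y, x_i⁆`.
-/

namespace Subgroup

variable {G : Type*} [Group G]

theorem commutatorElement_mem_of_coe_eq_twistedClass {H : Subgroup G} {g : G}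
    (hH : (H : Set G) = twistedClass g) (y : G) : ⁅y, g⁆ ∈ H := by
  rw [← SetLike.mem_coe, hH]
  exact ⟨y, rfl⟩

theorem normal_of_coe_eq_twistedClass {H : Subgroup G} {g : G}
    (hH : (H : Set G) = twistedClass g) : H.Normal where
  conj_mem a ha b := by
    obtain ⟨y, rfl⟩ : a ∈ twistedClass g := hH ▸ ha
    have hconj : b * ⁅y, g⁆ * b⁻¹ = ⁅b * y, g⁆ * ⁅b, g⁆⁻¹ := by group
    rw [hconj]
    exact mul_mem (commutatorElement_mem_of_coe_eq_twistedClass hH _)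
      (inv_mem (commutatorElement_mem_of_coe_eq_twistedClass hH _))

theorem isMulCommutative_of_closure_insert_eq_top {a : G} {S : Set G}
    (hgen : closure (insert a S) = ⊤) (hS : S ⊆ center G) : IsMulCommutative G := by
  have ha : a ∈ center G := by
    simp only [center_eq_iInf hgen, mem_iInf, mem_centralizer_singleton_iff]
    rintro g (rfl | hg)
    · rfl
    · exact mem_center_iff.mp (hS hg) a
  rw [← center_eq_top_iff, eq_top_iff, ← hgen, closure_le]
  exact Set.insert_subset ha hS

theorem commutator_le_of_closure_insert_eq_top {N : Subgroup G} [N.Normal] {a : G} {S : Set G}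
    (hgen : closure (insert a S) = ⊤) (hS : ∀ s ∈ S, ∀ y : G, ⁅y, s⁆ ∈ N) :
    _root_.commutator G ≤ N := by
  rw [← Normal.quotient_commutative_iff_commutator_le]
  apply isMulCommutative_of_closure_insert_eq_top (a := (a : G ⧸ N)) (S := (↑) '' S)
  · rw [← Set.image_insert_eq, ← QuotientGroup.coe_mk', ← MonoidHom.map_closure, hgen,
      ← MonoidHom.range_eq_map, QuotientGroup.range_mk']
  · rintro _ ⟨s, hs, rfl⟩
    refine mem_center_iff.mpr fun q ↦ ?_
    induction q using QuotientGroup.induction_on with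
    | H y =>
      rw [← commutatorElement_eq_one_iff_mul_comm, ← QuotientGroup.mk'_apply,
        ← QuotientGroup.mk'_apply, ← map_commutatorElement, QuotientGroup.mk'_apply,
        QuotientGroup.eq_one_iff]
      exact hS s hs y

theorem exists_prod_ofFn_eq_of_mem_iSup_of_normal {m : ℕ} {H : Fin m → Subgroup G}
    [∀ i, (H i).Normal] {g : G} (hg : g ∈ ⨆ i, H i) :
    ∃ f : Fin m → G, (∀ i, f i ∈ H i) ∧ (List.ofFn f).prod = g := by
  induction m generalizing g with
  | zero =>
    rw [iSup_of_empty, mem_bot] at hg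
    exact ⟨Fin.elim0, fun i ↦ i.elim0, by simp [hg]⟩
  | succ m ih =>
    rw [← sSup_range, Fin.range_fin_succ, sSup_insert, sSup_range, mem_sup_of_normal_left] at hg
    obtain ⟨y, hy, z, hz, rfl⟩ := hg
    obtain ⟨f, hf, rfl⟩ := ih (H := fun i ↦ H i.succ) hz
    exact ⟨Fin.cons y f, Fin.cases hy hf, by simp⟩

end Subgroup

theorem stmt_8_general {G : Type*} [Group G] (n : ℕ) (x : Fin n → G)
    (hgen : Subgroup.closure (Set.range x) = ⊤)
    (h : ∀ g : G, ∃ H : Subgroup G, (H : Set G) = twistedClass g) :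
    ∀ g ∈ commutator G, ∃ l : List G, l.length ≤ n - 1 ∧
      (∀ y ∈ l, ∃ a b : G, y = ⁅a, b⁆) ∧ l.prod = g := by
  choose H hH using h
  have hnormal : ∀ g, (H g).Normal := fun g ↦ Subgroup.normal_of_coe_eq_twistedClass (hH g)
  intro g hg
  cases n with
  | zero =>
    rw [Set.range_eq_empty, Subgroup.closure_empty] at hgen
    have hg1 : g = 1 := by simpa [← hgen] using le_top (a := commutator G) hg
    exact ⟨[], by simp, by simp, hg1.symm⟩
  | succ m =>
    rw [Fin.range_fin_succ] at hgen
    have hle : commutator G ≤ ⨆ i, H (Fin.tail x i) :=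
      Subgroup.commutator_le_of_closure_insert_eq_top hgen fun _ ⟨i, hi⟩ y ↦
        le_iSup (fun i ↦ H (Fin.tail x i)) i
          (hi ▸ Subgroup.commutatorElement_mem_of_coe_eq_twistedClass (hH _) y)
    obtain ⟨f, hf, rfl⟩ := Subgroup.exists_prod_ofFn_eq_of_mem_iSup_of_normal (hle hg)
    refine ⟨List.ofFn f, by simp, ?_, rfl⟩
    simp only [List.mem_ofFn, forall_exists_index, forall_apply_eq_imp_iff]
    intro i
    obtain ⟨a, ha⟩ : f i ∈ twistedClass (Fin.tail x i) := hH _ ▸ hf i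
    exact ⟨a, _, ha⟩

theorem stmt_8 {G : Type*} [Group G] (n : ℕ) (hn : 2 ≤ n) (x : Fin n → G)
    (hgen : Subgroup.closure (Set.range x) = ⊤)
    (h : ∀ g : G, ∃ H : Subgroup G, (H : Set G) = twistedClass g) :
    ∀ g ∈ commutator G, ∃ l : List G, l.length ≤ n - 1 ∧
      (∀ y ∈ l, ∃ a b : G, y = ⁅a, b⁆) ∧ l.prod = g :=
  stmt_8_general n x hgen h
end

section
/- Let G be an infinite group such that for every g in G the twisted conjugacy class [e]_g = {[x,g] : x ∈ G} is a subgroup of G. Then G has infinitely many conjugacy classes. -/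
/-!
Write `T g = {⁅x, g⁆ : x ∈ G}`. Since `⁅x, g⁆ * g = x * g * x⁻¹`, the conjugacy class of `g`
is the translate `T g * g`, so the two are finite together. When every `T g` is a subgroup,
each `T g` is normal and depends only on the conjugacy class of `g`; moreover `y ∈ T g` forces
`T y ⊆ T g`, with equality only for `y = 1`, because `y ∈ T y` forces `y = 1`.

If there were only finitely many conjugacy classes, there would be only finitely many sets `T g`,
and, `G` being infinite, some conjugacy class and hence some `T g` would be infinite. Take `T g`
minimal among the infinite ones. Every `y ∈ T g` then has `T y` finite, hence a finite conjugacy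
class, so `T g` is covered by finitely many finite conjugacy classes: a contradiction.
-/

open scoped commutatorElement

theorem finite_of_forall_finite_conjugatesOf {M : Type*} [Monoid M] [Finite (ConjClasses M)]
    {s : Set M} (hs : ∀ y ∈ s, (conjugatesOf y).Finite) : s.Finite := by
  refine ((Set.toFinite (ConjClasses.mk '' s)).preimage' ?_).subset (Set.subset_preimage_image _ _)
  rintro _ ⟨y, hy, rfl⟩
  rw [← ConjClasses.carrier_eq_preimage_mk]
  exact hs y hy

theorem finite_range_of_isConj_imp_eq {M α : Type*} [Monoid M] [Finite (ConjClasses M)]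
    {f : M → α} (hf : ∀ a b, IsConj a b → f a = f b) : (Set.range f).Finite :=
  (Set.finite_range (ι := ConjClasses M) (Quotient.lift (s := IsConj.setoid M) f hf)).subset
    (by rintro _ ⟨a, rfl⟩; exact ⟨ConjClasses.mk a, rfl⟩)

section TwistedClass

variable {G : Type*} [Group G]

theorem mem_twistedClass {g : G} (x : G) : ⁅x, g⁆ ∈ twistedClass g := ⟨x, rfl⟩

theorem twistedClass_one : twistedClass (1 : G) = {1} := by
  ext y
  simp [twistedClass, commutatorElement_def]

theorem conjugatesOf_eq_image_twistedClass (g : G) :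
    conjugatesOf g = (· * g) '' twistedClass g := by
  ext b
  change IsConj g b ↔ _
  rw [isConj_iff]
  constructor
  · rintro ⟨c, rfl⟩
    exact ⟨_, mem_twistedClass c, by group⟩
  · rintro ⟨_, ⟨c, rfl⟩, rfl⟩
    exact ⟨c, by group⟩

theorem finite_conjugatesOf_iff_finite_twistedClass (g : G) :
    (conjugatesOf g).Finite ↔ (twistedClass g).Finite := by
  rw [conjugatesOf_eq_image_twistedClass]
  exact Set.finite_image_iff (mul_left_injective g).injOn

theorem twistedClass_conj (c g : G) :
    twistedClass (c * g * c⁻¹) = (fun y => c * y * c⁻¹) '' twistedClass g := by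
  ext y
  constructor
  · rintro ⟨x, rfl⟩
    exact ⟨_, mem_twistedClass (c⁻¹ * x * c), by group⟩
  · rintro ⟨_, ⟨x, rfl⟩, rfl⟩
    exact ⟨c * x * c⁻¹, by group⟩

variable {H : Subgroup G} {g : G}

theorem Subgroup.normal_of_coe_eq_twistedClass_s13 (hH : (H : Set G) = twistedClass g) : H.Normal := by
  have mem : ∀ x, ⁅x, g⁆ ∈ H := fun x => hH ▸ mem_twistedClass x
  refine ⟨fun n hn z => ?_⟩
  obtain ⟨x, rfl⟩ : n ∈ twistedClass g := hH ▸ hn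
  have hconj : z * ⁅x, g⁆ * z⁻¹ = ⁅z * x, g⁆ * ⁅z, g⁆⁻¹ := by group
  rw [hconj]
  exact mul_mem (mem _) (inv_mem (mem _))

theorem eq_one_of_self_mem_twistedClass (hH : (H : Set G) = twistedClass g)
    (hg : g ∈ twistedClass g) : g = 1 := by
  rw [← hH] at hg
  obtain ⟨x, hx⟩ : g⁻¹ ∈ twistedClass g := hH ▸ inv_mem hg
  rw [commutatorElement_def] at hx
  exact conj_eq_one_iff.mp (mul_eq_right.mp hx.symm)

theorem twistedClass_subset_of_mem (hH : (H : Set G) = twistedClass g) {y : G}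
    (hy : y ∈ twistedClass g) : twistedClass y ⊆ twistedClass g := by
  have := Subgroup.normal_of_coe_eq_twistedClass_s13 hH
  rw [← hH] at hy ⊢
  rintro _ ⟨x, rfl⟩
  rw [commutatorElement_def]
  exact mul_mem (this.conj_mem _ hy _) (inv_mem hy)

theorem twistedClass_ssubset_of_mem (hH : (H : Set G) = twistedClass g) {K : Subgroup G} {y : G}
    (hK : (K : Set G) = twistedClass y) (hy : y ∈ twistedClass g) (hy1 : y ≠ 1) :
    twistedClass y ⊂ twistedClass g :=
  (twistedClass_subset_of_mem hH hy).ssubset_of_not_subset fun hsub =>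
    hy1 (eq_one_of_self_mem_twistedClass hK (hsub hy))

theorem twistedClass_conj_subset (hH : (H : Set G) = twistedClass g) (c : G) :
    twistedClass (c * g * c⁻¹) ⊆ twistedClass g := by
  have := Subgroup.normal_of_coe_eq_twistedClass_s13 hH
  rw [twistedClass_conj, ← hH]
  rintro _ ⟨x, hx, rfl⟩
  exact this.conj_mem x hx c

theorem twistedClass_eq_of_isConj {K : Subgroup G} {a b : G} (ha : (H : Set G) = twistedClass a)
    (hb : (K : Set G) = twistedClass b) (hab : IsConj a b) : twistedClass a = twistedClass b := by
  obtain ⟨c, rfl⟩ := isConj_iff.mp hab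
  have hback := twistedClass_conj_subset hb c⁻¹
  rw [show c⁻¹ * (c * a * c⁻¹) * c⁻¹⁻¹ = a by group] at hback
  exact hback.antisymm (twistedClass_conj_subset ha c)

end TwistedClass

theorem stmt_13 {G : Type*} [Group G] [Infinite G]
    (h : ∀ g : G, ∃ H : Subgroup G, (H : Set G) = twistedClass g) :
    Infinite (ConjClasses G) := by
  by_contra hfin
  rw [not_infinite_iff_finite] at hfin
  choose H hH using h
  have hrange : (Set.range (twistedClass : G → Set G)).Finite :=
    finite_range_of_isConj_imp_eq fun a b => twistedClass_eq_of_isConj (hH a) (hH b)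
  obtain ⟨g₀, hg₀⟩ : ∃ g : G, (twistedClass g).Infinite := by
    by_contra! hall
    refine Set.infinite_univ (α := G) (finite_of_forall_finite_conjugatesOf fun y _ => ?_)
    exact (finite_conjugatesOf_iff_finite_twistedClass y).mpr (hall y)
  obtain ⟨g, hmin⟩ := Set.Finite.exists_minimalFor' twistedClass {g | (twistedClass g).Infinite}
    (hrange.subset (Set.image_subset_range _ _)) ⟨g₀, hg₀⟩
  refine hmin.1 (finite_of_forall_finite_conjugatesOf fun y hy => ?_)
  rw [finite_conjugatesOf_iff_finite_twistedClass]
  rcases eq_or_ne y 1 with rfl | hy1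
  · simp [twistedClass_one]
  · by_contra hyinf
    exact hmin.not_prop_of_lt (twistedClass_ssubset_of_mem (hH g) (hH y) hy hy1) hyinf
end
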